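/- Given a Rockafellian R : U × X → [-∞,+∞], define the perturbation function φ(x) = inf_{u∈U} R(u,x), the Lagrangian L(u,y) = inf_{x∈X}( R(u,x) ⊕ (-c(x,y)) ), and the dual function ψ(y) = inf_{u∈U} L(u,y). Then -ψ = φ^c, the c-Fenchel-Moreau conjugate of φ. -/

import Mathlib

/-- Moreau lower addition on `EReal`: coincides with `EReal` addition,
for which `(+∞) ⊞ (-∞) = -∞`. -/
noncomputable def lowAdd (a b : EReal) : EReal := a + b

/-- Moreau upper addition on `EReal`: `(+∞) ⊕ (-∞) = +∞`. -/
noncomputable def upAdd (a b : EReal) : EReal := -((-a) + (-b))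

/-- The `c`-Fenchel-Moreau conjugate of `f : X → EReal`. -/
noncomputable def conjC {X Y : Type*} (c : X → Y → EReal) (f : X → EReal) (y : Y) : EReal :=
  ⨆ x, lowAdd (c x y) (-f x)

/-- The `c'`-Fenchel-Moreau conjugate (reverse conjugate) of `g : Y → EReal`. -/
noncomputable def conjC' {X Y : Type*} (c : X → Y → EReal) (g : Y → EReal) (x : X) : EReal :=
  ⨆ y, lowAdd (c x y) (-g y)

lemma ereal_neg_iInf {ι : Sort*} (f : ι → EReal) : -(⨅ i, f i) = ⨆ i, -f i := by
  apply le_antisymm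
  · rw [EReal.neg_le]
    apply le_iInf
    intro i
    rw [EReal.neg_le]
    exact le_iSup (fun i => -f i) i
  · apply iSup_le
    intro i
    exact EReal.neg_le_neg_iff.mpr (iInf_le f i)

lemma ereal_add_iSup {ι : Sort*} [Nonempty ι] (a : EReal) (f : ι → EReal) :
    a + ⨆ i, f i = ⨆ i, (a + f i) := by
  apply le_antisymm
  · induction a with
    | bot => simp
    | coe r =>
      rw [add_comm, ← EReal.le_sub_iff_add_le (Or.inl (EReal.coe_ne_bot r))
        (Or.inl (EReal.coe_ne_top r))]
      apply iSup_le
      intro i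
      rw [EReal.le_sub_iff_add_le (Or.inl (EReal.coe_ne_bot r)) (Or.inl (EReal.coe_ne_top r)),
        add_comm]
      exact le_iSup (fun i => (r : EReal) + f i) i
    | top =>
      rcases eq_or_ne (⨆ i, f i) ⊥ with h | h
      · rw [h]; simp
      · obtain ⟨i, hi⟩ : ∃ i, f i ≠ ⊥ := by
          by_contra hc
          push_neg at hc
          exact h (by simp [hc])
        calc ⊤ + ⨆ i, f i ≤ ⊤ := le_top
          _ = ⊤ + f i := (EReal.top_add_of_ne_bot hi).symm
          _ ≤ ⨆ i, (⊤ + f i) := le_iSup (fun i => (⊤:EReal) + f i) i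
  · exact iSup_le fun i => add_le_add_right (le_iSup f i) a

theorem neg_dual_eq_conj_perturbation {U X Y : Type*} [Nonempty U] (c : X → Y → EReal)
    (R : U → X → EReal) (L : U → Y → EReal) (φ : X → EReal) (ψ : Y → EReal)
    (hL : ∀ u y, L u y = ⨅ x, upAdd (R u x) (-(c x y)))
    (hφ : ∀ x, φ x = ⨅ u, R u x)
    (hψ : ∀ y, ψ y = ⨅ u, L u y) :
    ∀ y : Y, -(ψ y) = conjC c φ y := by
  intro y
  have lhs : -(ψ y) = ⨆ u, ⨆ x, (c x y + -(R u x)) := by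
    rw [hψ, ereal_neg_iInf]
    congr 1
    ext u
    rw [hL, ereal_neg_iInf]
    congr 1
    ext x
    simp [upAdd, add_comm]
  rw [lhs, iSup_comm]
  unfold conjC lowAdd
  congr 1
  ext x
  rw [hφ, ereal_neg_iInf, ereal_add_iSup]
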